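/- For every stable model M of the translated program lpw(𝒫) of a PAP 𝒫 = ⟨H, P, O, γ⟩, the set A = M ∩ H is an admissible solution of 𝒫 and the total weak-constraint penalty of M equals sum_γ(A) = Σ_{h∈A} γ(h). -/
import Mathlib


/-- A propositional logic-program rule `head :- pos, not neg`.
`head = none` represents a strong constraint (rule with empty head). -/
structure LPRule where
  head : Option ℕ
  pos : Finset ℕ
  neg : Finset ℕ
deriving DecidableEq

namespace LP

/-- Truth of a rule head w.r.t. an interpretation; an empty head is never true. -/
def headTrue (I : Set ℕ) : Option ℕ → Prop
  | none => False
  | some a => a ∈ I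

/-- The body of a rule is true w.r.t. `I`. -/
def bodyTrue (I : Set ℕ) (r : LPRule) : Prop :=
  (∀ b ∈ r.pos, b ∈ I) ∧ (∀ b ∈ r.neg, b ∉ I)

/-- `I` satisfies rule `r`. -/
def satRule (I : Set ℕ) (r : LPRule) : Prop := bodyTrue I r → headTrue I r.head

/-- `I` is a model of the program `P`. -/
def isModel (P : Set LPRule) (I : Set ℕ) : Prop := ∀ r ∈ P, satRule I r

/-- A positive (negation-free) program. -/
def isPositive (P : Set LPRule) : Prop := ∀ r ∈ P, r.neg = ∅

/-- A constraint-free program (no rules with empty head). -/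
def constraintFree (P : Set LPRule) : Prop := ∀ r ∈ P, r.head ≠ none

/-- The Gelfond-Lifschitz reduct `P^I`. -/
def reduct (P : Set LPRule) (I : Set ℕ) : Set LPRule :=
  (fun r => LPRule.mk r.head r.pos ∅) '' {r ∈ P | ∀ b ∈ r.neg, b ∉ I}

/-- `M` is the least model of `P`. -/
def isLeastModel (P : Set LPRule) (M : Set ℕ) : Prop :=
  isModel P M ∧ ∀ M', isModel P M' → M ⊆ M'

/-- `M` is a stable model of `P`: it is the least model of the reduct `P^M`. -/
def isStable (P : Set LPRule) (M : Set ℕ) : Prop := isLeastModel (reduct P M) M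

/-- `facts S` is the set of facts `{p :- | p ∈ S}`. -/
def facts (S : Set ℕ) : Set LPRule := (fun p => LPRule.mk (some p) ∅ ∅) '' S

/-- The atoms occurring in a rule. -/
def ruleAtoms (r : LPRule) : Set ℕ := {a | r.head = some a} ∪ ↑r.pos ∪ ↑r.neg

/-- The Herbrand base of a program: all atoms occurring in it. -/
def atoms (P : Set LPRule) : Set ℕ := ⋃ r ∈ P, ruleAtoms r

/-- `p` depends on `q`: some rule has head `p` and `q` in its body. -/
def dependsOn (P : Set LPRule) (p q : ℕ) : Prop :=
  ∃ r ∈ P, r.head = some p ∧ (q ∈ r.pos ∨ q ∈ r.neg)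

/-- `P` is stratified: no rule with head `p` and `not q` in the body where
`q` transitively depends on `p`. -/
def stratified (P : Set LPRule) : Prop :=
  ∀ r ∈ P, ∀ p, r.head = some p → ∀ q ∈ r.neg, ¬ Relation.TransGen (dependsOn P) q p

/-- Hypotheses `H` do not occur in rule heads of `P`. -/
def hypFree (P : Set LPRule) (H : Finset ℕ) : Prop :=
  ∀ r ∈ P, ∀ h ∈ H, r.head ≠ some h

/-- `S` is an admissible solution: `S ⊆ H` and some stable model of
`P ∪ facts S` makes all observations true. -/
def admissible (P : Set LPRule) (H obsP obsN : Finset ℕ) (S : Set ℕ) : Prop :=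
  S ⊆ ↑H ∧ ∃ M, isStable (P ∪ facts S) M ∧ (∀ o ∈ obsP, o ∈ M) ∧ (∀ o ∈ obsN, o ∉ M)

/-- `sum_γ`: total penalty of the hypotheses of `H` belonging to `S`. -/
noncomputable def cost (γ : ℕ → NNReal) (H : Finset ℕ) (S : Set ℕ) : NNReal :=
  ∑ h ∈ H, S.indicator γ h

/-- `S` is an optimal solution: admissible with minimal total penalty. -/
def optimal (P : Set LPRule) (H obsP obsN : Finset ℕ) (γ : ℕ → NNReal) (S : Set ℕ) : Prop :=
  admissible P H obsP obsN S ∧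
  ∀ S', admissible P H obsP obsN S' → cost γ H S ≤ cost γ H S'

end LP

namespace LP

/-- `P2` potentially uses `P1`: no head atom of `P2` occurs in `P1`. -/
def potentiallyUses (P2 P1 : Set LPRule) : Prop :=
  ∀ r ∈ P2, ∀ a, r.head = some a → a ∉ atoms P1

/-- The translated program `lpw(𝒫)`: the original program `P`, the guessing rules
`h :- sol h`, `sol h :- not nsol h`, `nsol h :- not sol h` for each hypothesis `h ∈ H`,
and the strong constraints `:- not a` (resp. `:- a`) for positive (resp. negative)
observations. -/
def lpw (P : Set LPRule) (H obsP obsN : Finset ℕ) (sol nsol : ℕ → ℕ) : Set LPRule :=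
  P ∪ (⋃ h ∈ (↑H : Set ℕ),
        {LPRule.mk (some h) {sol h} ∅,
         LPRule.mk (some (sol h)) ∅ {nsol h},
         LPRule.mk (some (nsol h)) ∅ {sol h}})
    ∪ ((fun a => LPRule.mk none ∅ {a}) '' ↑obsP)
    ∪ ((fun a => LPRule.mk none {a} ∅) '' ↑obsN)

/-- The atoms `sol h` and `nsol h` are pairwise distinct fresh atoms not occurring
in `P`, `H`, or among the observations. -/
def freshAtoms (P : Set LPRule) (H obsP obsN : Finset ℕ) (sol nsol : ℕ → ℕ) : Prop :=
  Function.Injective sol ∧ Function.Injective nsol ∧ (∀ h h', sol h ≠ nsol h') ∧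
  ∀ h ∈ H, sol h ∉ atoms P ∪ ↑H ∪ ↑obsP ∪ ↑obsN ∧
           nsol h ∉ atoms P ∪ ↑H ∪ ↑obsP ∪ ↑obsN

/-- The total weak-constraint penalty of a model `M`: the weak constraint `:~ h [γ(h)]`
is violated by `M` iff `h ∈ M`, so the penalty is the sum of `γ(h)` over `h ∈ H ∩ M`. -/
noncomputable def penalty (γ : ℕ → NNReal) (H : Finset ℕ) (M : Set ℕ) : NNReal :=
  cost γ H M

/-- `M` is a best model of the translated program: a stable model (which in particular
satisfies all strong constraints) minimizing the total weight of violated weak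
constraints. -/
def isBest (P : Set LPRule) (H obsP obsN : Finset ℕ) (γ : ℕ → NNReal)
    (sol nsol : ℕ → ℕ) (M : Set ℕ) : Prop :=
  isStable (lpw P H obsP obsN sol nsol) M ∧
  ∀ M', isStable (lpw P H obsP obsN sol nsol) M' → penalty γ H M ≤ penalty γ H M'

end LP


section Aux

open LP

lemma LPAux.mem_reduct {P : Set LPRule} {I : Set ℕ} {r : LPRule} (hr : r ∈ P)
    (h : ∀ b ∈ r.neg, b ∉ I) : LPRule.mk r.head r.pos ∅ ∈ reduct P I :=
  ⟨r, ⟨hr, h⟩, rfl⟩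

lemma LPAux.reduct_elim {P : Set LPRule} {I : Set ℕ} {r' : LPRule} (h : r' ∈ reduct P I) :
    ∃ r, r ∈ P ∧ (∀ b ∈ r.neg, b ∉ I) ∧ r' = LPRule.mk r.head r.pos ∅ := by
  rcases h with ⟨r, ⟨hr, hn⟩, rfl⟩
  exact ⟨r, hr, hn, rfl⟩

lemma LPAux.head_mem_atoms {P : Set LPRule} {r : LPRule} {a : ℕ} (hr : r ∈ P)
    (h : r.head = some a) : a ∈ atoms P :=
  Set.mem_biUnion hr (Or.inl (Or.inl h))

lemma LPAux.pos_mem_atoms {P : Set LPRule} {r : LPRule} {a : ℕ} (hr : r ∈ P)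
    (h : a ∈ r.pos) : a ∈ atoms P :=
  Set.mem_biUnion hr (Or.inl (Or.inr (Finset.mem_coe.mpr h)))

lemma LPAux.neg_mem_atoms {P : Set LPRule} {r : LPRule} {a : ℕ} (hr : r ∈ P)
    (h : a ∈ r.neg) : a ∈ atoms P :=
  Set.mem_biUnion hr (Or.inr (Finset.mem_coe.mpr h))

lemma LPAux.reduct_union (A B : Set LPRule) (I : Set ℕ) :
    reduct (A ∪ B) I = reduct A I ∪ reduct B I := by
  unfold reduct
  have hsep : {r ∈ A ∪ B | ∀ b ∈ r.neg, b ∉ I}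
      = {r ∈ A | ∀ b ∈ r.neg, b ∉ I} ∪ {r ∈ B | ∀ b ∈ r.neg, b ∉ I} := by
    ext r
    constructor
    · rintro ⟨(h | h), hc⟩
      · exact Or.inl ⟨h, hc⟩
      · exact Or.inr ⟨h, hc⟩
    · rintro (⟨h, hc⟩ | ⟨h, hc⟩)
      · exact ⟨Or.inl h, hc⟩
      · exact ⟨Or.inr h, hc⟩
  rw [hsep, Set.image_union]

lemma LPAux.reduct_facts (S : Set ℕ) (I : Set ℕ) :
    reduct (facts S) I = facts S := by
  ext r
  constructor
  · rintro ⟨r0, ⟨⟨p, hp, rfl⟩, _⟩, rfl⟩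
    exact ⟨p, hp, rfl⟩
  · rintro ⟨p, hp, rfl⟩
    exact ⟨LPRule.mk (some p) ∅ ∅, ⟨⟨p, hp, rfl⟩,
      fun b hb => absurd hb (Finset.notMem_empty b)⟩, rfl⟩

end Aux

/-- every stable model `M` of `lpw(𝒫)` yields an admissible
solution `A = M ∩ H` of `𝒫`, and the weak-constraint penalty of `M` equals
`sum_γ(A)`. -/
theorem lpw_stable_to_admissible (P : Set LPRule) (hFin : P.Finite)
    (H obsP obsN : Finset ℕ) (γ : ℕ → NNReal) (sol nsol : ℕ → ℕ)
    (hHyp : LP.hypFree P H) (hFresh : LP.freshAtoms P H obsP obsN sol nsol)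
    (M : Set ℕ) (hM : LP.isStable (LP.lpw P H obsP obsN sol nsol) M) :
    LP.admissible P H obsP obsN (M ∩ ↑H) ∧
      LP.penalty γ H M = LP.cost γ H (M ∩ ↑H) := by
  classical
  obtain ⟨hM1, hM2⟩ := hM
  obtain ⟨hInjS, hInjN, hSN, hFr⟩ := hFresh
  set X : Set ℕ := (sol '' ↑H) ∪ (nsol '' ↑H) with hXdef
  -- lpw membership helpers
  have hPsub : P ⊆ LP.lpw P H obsP obsN sol nsol :=
    fun r hr => Or.inl (Or.inl (Or.inl hr))
  -- disjointness of X from the relevant atom sets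
  have hXatoms : ∀ a ∈ X, a ∉ LP.atoms P := by
    rintro a (⟨h, hh, rfl⟩ | ⟨h, hh, rfl⟩) hc
    · exact (hFr h (Finset.mem_coe.mp hh)).1 (Or.inl (Or.inl (Or.inl hc)))
    · exact (hFr h (Finset.mem_coe.mp hh)).2 (Or.inl (Or.inl (Or.inl hc)))
  have hXH : ∀ a ∈ X, a ∉ (↑H : Set ℕ) := by
    rintro a (⟨h, hh, rfl⟩ | ⟨h, hh, rfl⟩) hc
    · exact (hFr h (Finset.mem_coe.mp hh)).1 (Or.inl (Or.inl (Or.inr hc)))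
    · exact (hFr h (Finset.mem_coe.mp hh)).2 (Or.inl (Or.inl (Or.inr hc)))
  have hXoP : ∀ a ∈ X, a ∉ (↑obsP : Set ℕ) := by
    rintro a (⟨h, hh, rfl⟩ | ⟨h, hh, rfl⟩) hc
    · exact (hFr h (Finset.mem_coe.mp hh)).1 (Or.inl (Or.inr hc))
    · exact (hFr h (Finset.mem_coe.mp hh)).2 (Or.inl (Or.inr hc))
  have hXoN : ∀ a ∈ X, a ∉ (↑obsN : Set ℕ) := by
    rintro a (⟨h, hh, rfl⟩ | ⟨h, hh, rfl⟩) hc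
    · exact (hFr h (Finset.mem_coe.mp hh)).1 (Or.inr hc)
    · exact (hFr h (Finset.mem_coe.mp hh)).2 (Or.inr hc)
  -- facts about M extracted from the stable-model property
  have hObsP : ∀ a ∈ obsP, a ∈ M := by
    intro a ha
    by_contra hna
    have hrule : LPRule.mk none ∅ {a} ∈ LP.lpw P H obsP obsN sol nsol :=
      Or.inl (Or.inr ⟨a, Finset.mem_coe.mpr ha, rfl⟩)
    have hred := LPAux.mem_reduct (I := M) hrule
      (fun b hb => by rwa [Finset.mem_singleton.mp hb])
    exact hM1 _ hred ⟨fun b hb => absurd hb (Finset.notMem_empty b),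
      fun b hb => absurd hb (Finset.notMem_empty b)⟩
  have hObsN : ∀ a ∈ obsN, a ∉ M := by
    intro a ha hmem
    have hrule : LPRule.mk none {a} ∅ ∈ LP.lpw P H obsP obsN sol nsol :=
      Or.inr ⟨a, Finset.mem_coe.mpr ha, rfl⟩
    have hred := LPAux.mem_reduct (I := M) hrule
      (fun b hb => absurd hb (Finset.notMem_empty b))
    exact hM1 _ hred ⟨fun b hb => by rwa [Finset.mem_singleton.mp hb],
      fun b hb => absurd hb (Finset.notMem_empty b)⟩
  have hGmem : ∀ h ∈ H, ∀ r ∈ ({LPRule.mk (some h) {sol h} ∅,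
      LPRule.mk (some (sol h)) ∅ {nsol h},
      LPRule.mk (some (nsol h)) ∅ {sol h}} : Set LPRule),
      r ∈ LP.lpw P H obsP obsN sol nsol := by
    intro h hh r hr
    exact Or.inl (Or.inl (Or.inr (Set.mem_biUnion (Finset.mem_coe.mpr hh) hr)))
  have hSolM : ∀ h ∈ H, sol h ∈ M → h ∈ M := by
    intro h hh hs
    have hrule := hGmem h hh _ (Set.mem_insert _ _)
    have hred := LPAux.mem_reduct (I := M) hrule
      (fun b hb => absurd hb (Finset.notMem_empty b))
    exact hM1 _ hred ⟨fun b hb => by rwa [Finset.mem_singleton.mp hb],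
      fun b hb => absurd hb (Finset.notMem_empty b)⟩
  have hNsolM : ∀ h ∈ H, nsol h ∉ M → sol h ∈ M := by
    intro h hh hns
    have hrule := hGmem h hh _ (Set.mem_insert_of_mem _ (Set.mem_insert _ _))
    have hred := LPAux.mem_reduct (I := M) hrule
      (fun b hb => by rwa [Finset.mem_singleton.mp hb])
    exact hM1 _ hred ⟨fun b hb => absurd hb (Finset.notMem_empty b),
      fun b hb => absurd hb (Finset.notMem_empty b)⟩
  have hSolM' : ∀ h ∈ H, sol h ∉ M → nsol h ∈ M := by
    intro h hh hns
    have hrule := hGmem h hh _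
      (Set.mem_insert_of_mem _ (Set.mem_insert_of_mem _ rfl))
    have hred := LPAux.mem_reduct (I := M) hrule
      (fun b hb => by rwa [Finset.mem_singleton.mp hb])
    exact hM1 _ hred ⟨fun b hb => absurd hb (Finset.notMem_empty b),
      fun b hb => absurd hb (Finset.notMem_empty b)⟩
  -- M models the reduct of P
  have hMP : LP.isModel (LP.reduct P M) M := by
    intro r hr
    rcases LPAux.reduct_elim hr with ⟨r0, h0, hn, rfl⟩
    exact hM1 _ (LPAux.mem_reduct (I := M) (hPsub h0) hn)
  -- the reduct of the target program
  have hredEqP : LP.reduct P (M \ X) = LP.reduct P M := by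
    have hsep : {r ∈ P | ∀ b ∈ r.neg, b ∉ M \ X} = {r ∈ P | ∀ b ∈ r.neg, b ∉ M} := by
      ext r
      constructor
      · rintro ⟨hr, hn⟩
        refine ⟨hr, fun b hb hbM => hn b hb ⟨hbM, ?_⟩⟩
        exact fun hx => hXatoms b hx (LPAux.neg_mem_atoms hr hb)
      · rintro ⟨hr, hn⟩
        exact ⟨hr, fun b hb hbM => hn b hb hbM.1⟩
    unfold LP.reduct
    rw [hsep]
  have hQred : LP.reduct (P ∪ LP.facts (M ∩ ↑H)) (M \ X)
      = LP.reduct P M ∪ LP.facts (M ∩ ↑H) := by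
    rw [LPAux.reduct_union, hredEqP, LPAux.reduct_facts]
  -- M models R := reduct P M ∪ facts (M ∩ H)
  have hMR : LP.isModel (LP.reduct P M ∪ LP.facts (M ∩ ↑H)) M := by
    rintro r (hr | ⟨p, hp, rfl⟩)
    · exact hMP r hr
    · exact fun _ => hp.1
  -- M \ X models R
  have hM'R : LP.isModel (LP.reduct P M ∪ LP.facts (M ∩ ↑H)) (M \ X) := by
    rintro r (hr | ⟨p, hp, rfl⟩)
    · rcases LPAux.reduct_elim hr with ⟨r0, h0, hn, rfl⟩
      intro hbody
      have hbM : LP.bodyTrue M (LPRule.mk r0.head r0.pos ∅) :=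
        ⟨fun b hb => (hbody.1 b hb).1, fun b hb => absurd hb (Finset.notMem_empty b)⟩
      have hh := hMP _ (LPAux.mem_reduct (I := M) h0 hn) hbM
      show LP.headTrue (M \ X) r0.head
      cases hhead : r0.head with
      | none => rw [hhead] at hh; exact hh.elim
      | some a =>
        rw [hhead] at hh
        exact ⟨hh, fun hx => hXatoms a hx (LPAux.head_mem_atoms h0 hhead)⟩
    · exact fun _ => ⟨hp.1, fun hx => hXH p hx hp.2⟩
  -- key fact: M \ X is least among models of R
  have hMin : ∀ N, LP.isModel (LP.reduct P M ∪ LP.facts (M ∩ ↑H)) N →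
      M \ X ⊆ N := by
    intro N hN
    -- N ∩ M is also a model (Horn intersection)
    have hN0 : LP.isModel (LP.reduct P M ∪ LP.facts (M ∩ ↑H)) (N ∩ M) := by
      intro r hr hbody
      have hneg : r.neg = ∅ := by
        rcases hr with hr | ⟨p, hp, rfl⟩
        · rcases LPAux.reduct_elim hr with ⟨r0, _, _, rfl⟩; rfl
        · rfl
      have hnegI : ∀ (I : Set ℕ), ∀ b ∈ r.neg, b ∉ I := by
        intro I b hb; rw [hneg] at hb; exact absurd hb (Finset.notMem_empty b)
      have h1 := hN r hr ⟨fun b hb => (hbody.1 b hb).1, hnegI N⟩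
      have h2 := hMR r hr ⟨fun b hb => (hbody.1 b hb).2, hnegI M⟩
      show LP.headTrue (N ∩ M) r.head
      cases hhead : r.head with
      | none => rw [hhead] at h1; exact h1.elim
      | some a => rw [hhead] at h1 h2; exact ⟨h1, h2⟩
    -- the auxiliary interpretation N'
    have hN' : LP.isModel (LP.reduct (LP.lpw P H obsP obsN sol nsol) M)
        (((N ∩ M) \ X) ∪ (M ∩ X)) := by
      intro r' hr'
      rcases LPAux.reduct_elim hr' with ⟨r, hrL, hn, rfl⟩
      rcases hrL with ((hr | hrG) | hrOP) | hrON
      · -- r ∈ P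
        intro hbody
        have hbN0 : LP.bodyTrue (N ∩ M) (LPRule.mk r.head r.pos ∅) := by
          refine ⟨fun b hb => ?_, fun b hb => absurd hb (Finset.notMem_empty b)⟩
          rcases hbody.1 b hb with h1 | h2
          · exact h1.1
          · exact (hXatoms b h2.2 (LPAux.pos_mem_atoms hr hb)).elim
        have hhead := hN0 _ (Or.inl (LPAux.mem_reduct (I := M) hr hn)) hbN0
        show LP.headTrue (((N ∩ M) \ X) ∪ (M ∩ X)) r.head
        cases hh : r.head with
        | none => rw [hh] at hhead; exact hhead.elim
        | some a =>
          rw [hh] at hhead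
          exact Or.inl ⟨hhead, fun hx => hXatoms a hx (LPAux.head_mem_atoms hr hh)⟩
      · -- r is a guessing rule
        rcases Set.mem_iUnion₂.mp hrG with ⟨h, hh, hrg⟩
        have hhH : h ∈ H := Finset.mem_coe.mp hh
        simp only [Set.mem_insert_iff, Set.mem_singleton_iff] at hrg
        rcases hrg with rfl | rfl | rfl
        · -- h :- sol h
          intro hbody
          have hsol : sol h ∈ ((N ∩ M) \ X) ∪ (M ∩ X) :=
            hbody.1 (sol h) (Finset.mem_singleton_self _)
          have hsolX : sol h ∈ X := Or.inl ⟨h, hh, rfl⟩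
          have hsolM : sol h ∈ M := by
            rcases hsol with h1 | h2
            · exact (h1.2 hsolX).elim
            · exact h2.1
          have hhM : h ∈ M := hSolM h hhH hsolM
          have hfact : LPRule.mk (some h) ∅ ∅ ∈
              LP.reduct P M ∪ LP.facts (M ∩ ↑H) :=
            Or.inr ⟨h, ⟨hhM, hh⟩, rfl⟩
          have hhN0 := hN0 _ hfact ⟨fun b hb => absurd hb (Finset.notMem_empty b),
            fun b hb => absurd hb (Finset.notMem_empty b)⟩
          exact Or.inl ⟨hhN0, fun hx => hXH h hx hh⟩
        · -- sol h :- not nsol h  (nsol h ∉ M)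
          intro _
          have hnm : nsol h ∉ M := hn (nsol h) (Finset.mem_singleton_self _)
          exact Or.inr ⟨hNsolM h hhH hnm, Or.inl ⟨h, hh, rfl⟩⟩
        · -- nsol h :- not sol h  (sol h ∉ M)
          intro _
          have hnm : sol h ∉ M := hn (sol h) (Finset.mem_singleton_self _)
          exact Or.inr ⟨hSolM' h hhH hnm, Or.inr ⟨h, hh, rfl⟩⟩
      · -- positive observation constraint: cannot be in the reduct
        rcases hrOP with ⟨a, ha, rfl⟩
        exact ((hn a (Finset.mem_singleton_self a)) (hObsP a (Finset.mem_coe.mp ha))).elim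
      · -- negative observation constraint
        rcases hrON with ⟨a, ha, rfl⟩
        intro hbody
        have haN' := hbody.1 a (Finset.mem_singleton_self a)
        have haM : a ∈ M := by
          rcases haN' with h1 | h2
          · exact h1.1.2
          · exact h2.1
        exact (hObsN a (Finset.mem_coe.mp ha) haM).elim
    have hMsub : M ⊆ ((N ∩ M) \ X) ∪ (M ∩ X) := hM2 _ hN'
    intro x hx
    rcases hMsub hx.1 with h1 | h2
    · exact h1.1.1
    · exact (hx.2 h2.2).elim
  -- assemble
  refine ⟨⟨Set.inter_subset_right, M \ X, ⟨?_, ?_⟩, ?_, ?_⟩, ?_⟩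
  · rw [show LP.facts (M ∩ ↑H) = LP.facts (M ∩ ↑H) from rfl]
    show LP.isModel (LP.reduct (P ∪ LP.facts (M ∩ ↑H)) (M \ X)) (M \ X)
    rw [hQred]; exact hM'R
  · intro N hN
    rw [hQred] at hN
    exact hMin N hN
  · intro o ho
    exact ⟨hObsP o ho, fun hx => hXoP o hx (Finset.mem_coe.mpr ho)⟩
  · intro o ho hmem
    exact hObsN o ho hmem.1
  · unfold LP.penalty LP.cost
    refine Finset.sum_congr rfl (fun h hh => ?_)
    by_cases hm : h ∈ M
    · rw [Set.indicator_of_mem hm, Set.indicator_of_mem (Set.mem_inter hm (Finset.mem_coe.mpr hh))]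
    · rw [Set.indicator_of_notMem hm, Set.indicator_of_notMem (fun c => hm c.1)]
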